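/- Let G be a weighted graph in which every edge e satisfies R_e(G)·c_e ≥ δ for some δ > 0, where R_e is the effective resistance and c_e the conductance of e. Then G is (1/δ)-uniformly sparse: every nonempty vertex subset V' induces at most (|V'|-1)/δ edges. -/

import Mathlib

open Matrix

attribute [local instance] Classical.propDecidable

/-- `P` is the Moore–Penrose pseudoinverse of `A`: the four Penrose conditions. -/
def IsMoorePenrose {V : Type*} [Fintype V] [DecidableEq V]
    (A P : Matrix V V ℝ) : Prop :=
  A * P * A = A ∧ P * A * P = P ∧ (A * P)ᵀ = A * P ∧ (P * A)ᵀ = P * A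

/-- The weighted graph Laplacian of a weight function `c`. -/
def Lap {V : Type*} [Fintype V] [DecidableEq V] (c : V → V → ℝ) : Matrix V V ℝ :=
  Matrix.of fun i j => if i = j then ∑ k, c i k else -(c i j)

/-- The signed incidence vector of the pair `(i, j)`. -/
def chi {V : Type*} [DecidableEq V] (i j : V) : V → ℝ :=
  fun k => if k = i then 1 else if k = j then -1 else 0

/-!
Let `N` be the Laplacian of the edges of `G` inside `V'`, each counted in both orientations, so
that `δ · #E ≤ ∑ₑ cₑ Rₑ = tr (L⁺ N)`. As quadratic forms `N ≤ 2 L`, hence every spectral component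
`λ u uᵀ` of `N` satisfies `λ u uᵀ ≤ 2 L`; evaluating both forms at `L⁺ u` gives `λ uᵀ L⁺ u ≤ 2`.
Summing over the nonzero eigenvalues, `tr (L⁺ N) ≤ 2 rank N`, and `rank N ≤ |V'| - 1` because the
range of `N` lies in the span of the vectors `χ_{j i₀}`, `j ∈ V' \ {i₀}`.
-/

section RankOneSums

variable {n : Type*} [Fintype n]

lemma dotProduct_sum_smul_vecMulVec_mulVec {ι : Type*} (s : Finset ι) (a : ι → ℝ)
    (u : ι → n → ℝ) (y : n → ℝ) :
    y ⬝ᵥ (∑ k ∈ s, a k • vecMulVec (u k) (u k)) *ᵥ y = ∑ k ∈ s, a k * (u k ⬝ᵥ y) ^ 2 := by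
  rw [sum_mulVec, dotProduct_sum]
  refine Finset.sum_congr rfl fun k _ => ?_
  rw [smul_mulVec, vecMulVec_mulVec, dotProduct_smul, dotProduct_smul, dotProduct_comm]
  simp only [op_smul_eq_smul, smul_eq_mul]
  ring

lemma trace_mul_sum_smul_vecMulVec {ι : Type*} (P : Matrix n n ℝ) (s : Finset ι) (a : ι → ℝ)
    (u : ι → n → ℝ) :
    (P * ∑ k ∈ s, a k • vecMulVec (u k) (u k)).trace = ∑ k ∈ s, a k * (u k ⬝ᵥ P *ᵥ u k) := by
  simp only [Finset.mul_sum, trace_sum, mul_smul_comm, trace_smul, mul_vecMulVec,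
    trace_vecMulVec, smul_eq_mul, dotProduct_comm]

lemma rank_sum_smul_vecMulVec_le {ι : Type*} {s : Finset ι} {a : ι → ℝ} {u : ι → n → ℝ}
    {W : Submodule ℝ (n → ℝ)} (hu : ∀ k ∈ s, u k ∈ W) :
    (∑ k ∈ s, a k • vecMulVec (u k) (u k)).rank ≤ Module.finrank ℝ W := by
  refine Submodule.finrank_mono ?_
  rintro _ ⟨y, rfl⟩
  rw [mulVecLin_apply, sum_mulVec]
  refine Submodule.sum_mem _ fun k hk => ?_
  rw [smul_mulVec, vecMulVec_mulVec, op_smul_eq_smul]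
  exact W.smul_mem _ (W.smul_mem _ (hu k hk))

lemma mul_dotProduct_mulVec_le_of_sq_le {L P : Matrix n n ℝ} (hP : Pᵀ = P)
    (hPLP : P * L * P = P) {μ a : ℝ} (hμ : 0 ≤ μ) (ha : 0 ≤ a) (u : n → ℝ)
    (h : ∀ y, μ * (u ⬝ᵥ y) ^ 2 ≤ a * (y ⬝ᵥ L *ᵥ y)) :
    μ * (u ⬝ᵥ P *ᵥ u) ≤ a := by
  set t := u ⬝ᵥ P *ᵥ u
  have hPu : P *ᵥ u ⬝ᵥ L *ᵥ (P *ᵥ u) = t := by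
    nth_rewrite 1 [← hP]
    rw [mulVec_transpose, ← dotProduct_mulVec, mulVec_mulVec, mulVec_mulVec, hPLP]
  have key : μ * t ^ 2 ≤ a * t := by simpa only [hPu] using h (P *ᵥ u)
  rcases le_or_gt t 0 with ht | ht
  · nlinarith
  · nlinarith

variable [DecidableEq n]

lemma Matrix.IsHermitian.eq_sum_smul_vecMulVec {A : Matrix n n ℝ} (hA : A.IsHermitian) :
    A = ∑ k, hA.eigenvalues k •
      vecMulVec ⇑(hA.eigenvectorBasis k) ⇑(hA.eigenvectorBasis k) := by
  conv_lhs => rw [hA.spectral_theorem]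
  ext i j
  simp only [RCLike.ofReal_real_eq_id, CompTriple.comp_eq, Unitary.conjStarAlgAut_apply,
    mul_apply, eigenvectorUnitary_apply, diagonal_apply, mul_ite, mul_zero, Finset.sum_ite_eq',
    Finset.mem_univ, ↓reduceIte, star_apply, star_trivial, vecMulVec, smul_of, sum_apply,
    of_apply, Pi.smul_apply, smul_eq_mul]
  exact Finset.sum_congr rfl fun k _ => by ring

theorem trace_mul_le_mul_rank {L P N : Matrix n n ℝ} (hP : Pᵀ = P) (hPLP : P * L * P = P)
    (hN : N.PosSemidef) {a : ℝ} (ha : 0 ≤ a) (hNL : ∀ y, y ⬝ᵥ N *ᵥ y ≤ a * (y ⬝ᵥ L *ᵥ y)) :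
    (P * N).trace ≤ a * N.rank := by
  set μ := hN.isHermitian.eigenvalues
  set u : n → n → ℝ := fun k => ⇑(hN.isHermitian.eigenvectorBasis k)
  have hμ : ∀ k, 0 ≤ μ k := hN.eigenvalues_nonneg
  have hNsum : N = ∑ k, μ k • vecMulVec (u k) (u k) := hN.isHermitian.eq_sum_smul_vecMulVec
  have hterm : ∀ k, μ k * (u k ⬝ᵥ P *ᵥ u k) ≤ a := fun k =>
    mul_dotProduct_mulVec_le_of_sq_le hP hPLP (hμ k) ha (u k) fun y =>
      calc μ k * (u k ⬝ᵥ y) ^ 2 ≤ ∑ j, μ j * (u j ⬝ᵥ y) ^ 2 :=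
            Finset.single_le_sum (f := fun j => μ j * (u j ⬝ᵥ y) ^ 2)
              (fun j _ => mul_nonneg (hμ j) (sq_nonneg _)) (Finset.mem_univ k)
        _ = y ⬝ᵥ N *ᵥ y := by rw [hNsum, dotProduct_sum_smul_vecMulVec_mulVec]
        _ ≤ a * (y ⬝ᵥ L *ᵥ y) := hNL y
  calc (P * N).trace = ∑ k, μ k * (u k ⬝ᵥ P *ᵥ u k) := by
        rw [hNsum, trace_mul_sum_smul_vecMulVec]
    _ ≤ ∑ k, if μ k ≠ 0 then a else 0 := by
        refine Finset.sum_le_sum fun k _ => ?_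
        split_ifs with hk
        · exact hterm k
        · simp [not_not.mp hk]
    _ = a * N.rank := by
        rw [hN.isHermitian.rank_eq_card_non_zero_eigs, Fintype.card_subtype, ← Finset.sum_filter,
          Finset.sum_const, nsmul_eq_mul, mul_comm]

end RankOneSums

namespace IsMoorePenrose

variable {n : Type*} [Fintype n] [DecidableEq n] {A P Q : Matrix n n ℝ}

lemma transpose (h : IsMoorePenrose A P) : IsMoorePenrose Aᵀ Pᵀ := by
  obtain ⟨h1, h2, h3, h4⟩ := h
  refine ⟨?_, ?_, ?_, ?_⟩
  · rw [← transpose_mul, ← transpose_mul, ← mul_assoc, h1]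
  · rw [← transpose_mul, ← transpose_mul, ← mul_assoc, h2]
  · rw [← transpose_mul, h4, h4]
  · rw [← transpose_mul, h3, h3]

lemma unique (hP : IsMoorePenrose A P) (hQ : IsMoorePenrose A Q) : P = Q := by
  obtain ⟨p1, p2, p3, p4⟩ := hP
  obtain ⟨q1, q2, q3, q4⟩ := hQ
  have hAP : A * P = A * Q :=
    calc A * P = (A * Q * A * P)ᵀ := by rw [q1, p3]
      _ = (A * P)ᵀ * (A * Q)ᵀ := by rw [← transpose_mul]; simp only [mul_assoc]
      _ = A * Q := by rw [p3, q3, ← mul_assoc, p1]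
  have hPA : P * A = Q * A :=
    calc P * A = (P * A * Q * A)ᵀ := by rw [mul_assoc P, mul_assoc, q1, p4]
      _ = (Q * A)ᵀ * (P * A)ᵀ := by rw [← transpose_mul]; simp only [mul_assoc]
      _ = Q * A := by rw [p4, q4, mul_assoc, ← mul_assoc A, p1]
  calc P = P * A * P := p2.symm
    _ = Q * A * Q := by rw [mul_assoc, hAP, ← mul_assoc, hPA]
    _ = Q := q2

lemma transpose_eq_self (hA : Aᵀ = A) (h : IsMoorePenrose A P) : Pᵀ = P :=
  (hA ▸ h.transpose).unique h

end IsMoorePenrose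

lemma chi_eq_single_sub_single {V : Type*} [DecidableEq V] {i j : V} (hij : i ≠ j) :
    chi i j = Pi.single i 1 - Pi.single j 1 := by
  ext k
  by_cases hki : k = i <;> by_cases hkj : k = j <;> simp_all [chi]

section Laplacian

variable {V : Type*} [Fintype V] [DecidableEq V] {c : V → V → ℝ}

lemma chi_dotProduct {i j : V} (hij : i ≠ j) (x : V → ℝ) : chi i j ⬝ᵥ x = x i - x j := by
  rw [chi_eq_single_sub_single hij, sub_dotProduct, single_one_dotProduct, single_one_dotProduct]

lemma lap_transpose (hsymm : ∀ i j, c i j = c j i) : (Lap c)ᵀ = Lap c := by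
  ext i j
  by_cases h : i = j
  · simp [Lap, h]
  · simp [Lap, h, Ne.symm h, hsymm i j]

lemma lap_mulVec_apply (hdiag : ∀ i, c i i = 0) (x : V → ℝ) (i : V) :
    (Lap c *ᵥ x) i = ∑ j, c i j * (x i - x j) := by
  have hLap : Lap c = diagonal (fun i => ∑ k, c i k) - of c := by
    ext i j
    by_cases h : i = j
    · simp [Lap, h, hdiag]
    · simp [Lap, h]
  simp only [hLap, sub_mulVec, Pi.sub_apply, mulVec_diagonal, mul_sub, Finset.sum_sub_distrib,
    Finset.sum_mul]
  rfl

lemma two_mul_dotProduct_lap_mulVec (hsymm : ∀ i j, c i j = c j i) (hdiag : ∀ i, c i i = 0)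
    (x : V → ℝ) : 2 * (x ⬝ᵥ Lap c *ᵥ x) = ∑ i, ∑ j, c i j * (x i - x j) ^ 2 := by
  have hquad : x ⬝ᵥ Lap c *ᵥ x = ∑ i, ∑ j, c i j * x i * (x i - x j) := by
    simp only [dotProduct, lap_mulVec_apply hdiag, Finset.mul_sum]
    exact Finset.sum_congr rfl fun i _ => Finset.sum_congr rfl fun j _ => by ring
  have hswap : ∑ i, ∑ j, c i j * x i * (x i - x j) = ∑ i, ∑ j, c i j * x j * (x j - x i) := by
    rw [Finset.sum_comm]
    simp only [hsymm]
  calc 2 * (x ⬝ᵥ Lap c *ᵥ x)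
        = ∑ i, ∑ j, c i j * x i * (x i - x j) + ∑ i, ∑ j, c i j * x j * (x j - x i) := by
        rw [two_mul, ← hswap, hquad]
    _ = ∑ i, ∑ j, c i j * (x i - x j) ^ 2 := by
        simp only [← Finset.sum_add_distrib]
        exact Finset.sum_congr rfl fun i _ => Finset.sum_congr rfl fun j _ => by ring

def edgeLap (c : V → V → ℝ) (E : Finset (V × V)) : Matrix V V ℝ :=
  ∑ p ∈ E, c p.1 p.2 • vecMulVec (chi p.1 p.2) (chi p.1 p.2)

lemma posSemidef_edgeLap {E : Finset (V × V)} (hc : ∀ p ∈ E, 0 ≤ c p.1 p.2) :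
    (edgeLap c E).PosSemidef :=
  posSemidef_sum E fun p hp => (posSemidef_vecMulVec_self_star _).smul (hc p hp)

lemma dotProduct_edgeLap_mulVec_le (hsymm : ∀ i j, c i j = c j i) (hdiag : ∀ i, c i i = 0)
    (hc : ∀ i j, 0 ≤ c i j) {E : Finset (V × V)} (hE : ∀ p ∈ E, p.1 ≠ p.2) (y : V → ℝ) :
    y ⬝ᵥ edgeLap c E *ᵥ y ≤ 2 * (y ⬝ᵥ Lap c *ᵥ y) :=
  calc y ⬝ᵥ edgeLap c E *ᵥ y = ∑ p ∈ E, c p.1 p.2 * (y p.1 - y p.2) ^ 2 := by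
        rw [edgeLap, dotProduct_sum_smul_vecMulVec_mulVec]
        exact Finset.sum_congr rfl fun p hp => by rw [chi_dotProduct (hE p hp)]
    _ ≤ ∑ p : V × V, c p.1 p.2 * (y p.1 - y p.2) ^ 2 :=
        Finset.sum_le_sum_of_subset_of_nonneg (Finset.subset_univ E)
          fun p _ _ => mul_nonneg (hc _ _) (sq_nonneg _)
    _ = 2 * (y ⬝ᵥ Lap c *ᵥ y) := by
        rw [two_mul_dotProduct_lap_mulVec hsymm hdiag]
        exact Fintype.sum_prod_type' fun i j => c i j * (y i - y j) ^ 2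

lemma chi_mem_span_chi {V' : Finset V} {i₀ i j : V} (hi : i ∈ V') (hj : j ∈ V') (hij : i ≠ j) :
    chi i j ∈ Submodule.span ℝ ↑((V'.erase i₀).image (chi · i₀)) := by
  have hmem : ∀ k ∈ V', k ≠ i₀ → chi k i₀ ∈ Submodule.span ℝ ↑((V'.erase i₀).image (chi · i₀)) :=
    fun k hk hk₀ => Submodule.subset_span (Finset.mem_image_of_mem _ (Finset.mem_erase.2 ⟨hk₀, hk⟩))
  rcases eq_or_ne i i₀ with rfl | hi₀
  · have : chi i j = -chi j i := by
      rw [chi_eq_single_sub_single hij, chi_eq_single_sub_single hij.symm, neg_sub]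
    rw [this]
    exact Submodule.neg_mem _ (hmem j hj hij.symm)
  rcases eq_or_ne j i₀ with rfl | hj₀
  · exact hmem i hi hij
  · have : chi i j = chi i i₀ - chi j i₀ := by
      rw [chi_eq_single_sub_single hij, chi_eq_single_sub_single hi₀,
        chi_eq_single_sub_single hj₀, sub_sub_sub_cancel_right]
    rw [this]
    exact Submodule.sub_mem _ (hmem i hi hi₀) (hmem j hj hj₀)

lemma rank_edgeLap_le (c : V → V → ℝ) {V' : Finset V} {E : Finset (V × V)}
    (hE : E ⊆ V'.offDiag) {i₀ : V} (hi₀ : i₀ ∈ V') : (edgeLap c E).rank ≤ V'.card - 1 := by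
  set T := (V'.erase i₀).image (chi · i₀)
  calc (edgeLap c E).rank ≤ Module.finrank ℝ (Submodule.span ℝ (T : Set (V → ℝ))) := by
        unfold edgeLap
        exact rank_sum_smul_vecMulVec_le fun p hp => by
          obtain ⟨h1, h2, h12⟩ := Finset.mem_offDiag.1 (hE hp)
          exact chi_mem_span_chi h1 h2 h12
    _ ≤ T.card := finrank_span_finset_le_card T
    _ ≤ (V'.erase i₀).card := Finset.card_image_le
    _ = V'.card - 1 := Finset.card_erase_of_mem hi₀

end Laplacian

/-- Each edge of `G` inside `V'` appears twice in `V'.offDiag`, once per orientation. -/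
theorem stmt_14_general {V : Type*} [Fintype V] [DecidableEq V]
    (G : SimpleGraph V)
    (c : V → V → ℝ) (hsymm : ∀ i j, c i j = c j i)
    (hpos : ∀ i j, G.Adj i j → 0 < c i j)
    (hzero : ∀ i j, ¬ G.Adj i j → c i j = 0)
    (P : Matrix V V ℝ) (hP : IsMoorePenrose (Lap c) P)
    (δ : ℝ) (hδ : 0 < δ)
    (hedge : ∀ i j, G.Adj i j → δ ≤ (chi i j ⬝ᵥ P.mulVec (chi i j)) * c i j)
    (V' : Finset V) (hne : V'.Nonempty) :
    ((V'.offDiag.filter fun p => G.Adj p.1 p.2).card : ℝ) / 2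
      ≤ ((V'.card : ℝ) - 1) / δ := by
  obtain ⟨i₀, hi₀⟩ := hne
  set E := V'.offDiag.filter fun p => G.Adj p.1 p.2
  have hE : E ⊆ V'.offDiag := Finset.filter_subset _ _
  have hdiag : ∀ i, c i i = 0 := fun i => hzero i i (G.irrefl)
  have hc : ∀ i j, 0 ≤ c i j := fun i j => by
    by_cases h : G.Adj i j
    exacts [(hpos i j h).le, (hzero i j h).ge]
  have hlow : δ * E.card ≤ (P * edgeLap c E).trace :=
    calc δ * E.card = ∑ _p ∈ E, δ := by rw [Finset.sum_const, nsmul_eq_mul, mul_comm]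
      _ ≤ ∑ p ∈ E, c p.1 p.2 * (chi p.1 p.2 ⬝ᵥ P *ᵥ chi p.1 p.2) :=
          Finset.sum_le_sum fun p hp => mul_comm (c p.1 p.2) _ ▸ hedge _ _ (Finset.mem_filter.1 hp).2
      _ = (P * edgeLap c E).trace := (trace_mul_sum_smul_vecMulVec _ _ _ _).symm
  have hup : (P * edgeLap c E).trace ≤ 2 * (edgeLap c E).rank :=
    trace_mul_le_mul_rank (hP.transpose_eq_self (lap_transpose hsymm)) hP.2.1
      (posSemidef_edgeLap fun p _ => hc _ _) zero_le_two
      (dotProduct_edgeLap_mulVec_le hsymm hdiag hc fun p hp => (Finset.mem_offDiag.1 (hE hp)).2.2)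
  have hrank : ((edgeLap c E).rank : ℝ) ≤ V'.card - 1 := by
    have hcard : 1 ≤ V'.card := Finset.card_pos.2 ⟨i₀, hi₀⟩
    calc ((edgeLap c E).rank : ℝ) ≤ ((V'.card - 1 : ℕ) : ℝ) := by
          exact_mod_cast rank_edgeLap_le c hE hi₀
      _ = V'.card - 1 := by rw [Nat.cast_sub hcard, Nat.cast_one]
  rw [div_le_div_iff₀ two_pos hδ]
  linarith

/-- If every edge `e` of a connected weighted graph `G` satisfies `R_e(G) * c_e ≥ δ`
with `δ > 0`, then `G` is `(1/δ)`-uniformly sparse: every nonempty vertex subset `V'`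
induces at most `(|V'| - 1)/δ` edges.  (Each unordered edge appears twice in
`V'.offDiag`.) -/
theorem stmt_14 {V : Type*} [Fintype V] [DecidableEq V]
    (G : SimpleGraph V) (hconn : G.Connected)
    (c : V → V → ℝ) (hsymm : ∀ i j, c i j = c j i)
    (hpos : ∀ i j, G.Adj i j → 0 < c i j)
    (hzero : ∀ i j, ¬ G.Adj i j → c i j = 0)
    (P : Matrix V V ℝ) (hP : IsMoorePenrose (Lap c) P)
    (δ : ℝ) (hδ : 0 < δ)
    (hedge : ∀ i j, G.Adj i j → δ ≤ (chi i j ⬝ᵥ P.mulVec (chi i j)) * c i j)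
    (V' : Finset V) (hne : V'.Nonempty) :
    ((V'.offDiag.filter fun p => G.Adj p.1 p.2).card : ℝ) / 2
      ≤ ((V'.card : ℝ) - 1) / δ :=
  stmt_14_general G c hsymm hpos hzero P hP δ hδ hedge V' hne
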